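/- arXiv:2112.09592 — 2 statements merged into one kernel-verified Lean document; each statement's English description precedes it below -/
import Mathlib

section
/- In ℤ³ equipped with the symmetric bilinear form B(u,w) = u₁w₃ + u₃w₁ + 6u₂w₂, the orthogonal complement of the vector v = (−6,2,3) equals the ℤ-span of w₁ = (−2,1,1) and w₂ = (2,0,1), and the Gram matrix of (w₁,w₂) is [[2,0],[0,4]]. (This computes the transcendental lattice of the singular K3 surface X₄ of Verrill's family: T(X₄) = [2 0 4].) -/
/-!
For `w = (a, b, c)` we have `B(v, w) = 3 (a + 4 b - 2 c)`, so `v^⊥` is cut out by `a = 2 c - 4 b`,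
and every such `w` equals `b • w₁ + (c - b) • w₂`.
-/

open Submodule

def verrillForm : LinearMap.BilinForm ℤ (Fin 3 → ℤ) :=
  Matrix.toLinearMap₂' ℤ !![0, 0, 1; 0, 6, 0; 1, 0, 0]

lemma verrillForm_apply (u w : Fin 3 → ℤ) :
    verrillForm u w = u 0 * w 2 + u 2 * w 0 + 6 * (u 1 * w 1) := by
  simp only [verrillForm, Matrix.toLinearMap₂'_apply', dotProduct, Matrix.mulVec, Matrix.of_apply,
    Matrix.cons_val', Matrix.cons_val_fin_one, Fin.sum_univ_three, Fin.isValue, Matrix.cons_val_zero,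
    Matrix.cons_val_one, Matrix.cons_val, zero_mul, add_zero, one_mul, zero_add]
  ring

lemma verrillForm_orthogonal_iff (w : Fin 3 → ℤ) :
    verrillForm ![-6, 2, 3] w = 0 ↔ w 0 = 2 * w 2 - 4 * w 1 := by
  simp only [Int.reduceNeg, verrillForm_apply, Fin.isValue, Matrix.cons_val_zero, neg_mul,
    Matrix.cons_val, Matrix.cons_val_one]
  omega

lemma eq_smul_add_smul_of_orthogonal {w : Fin 3 → ℤ} (hw : w 0 = 2 * w 2 - 4 * w 1) :
    w = w 1 • ![-2, 1, 1] + (w 2 - w 1) • ![2, 0, 1] := by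
  ext i
  fin_cases i <;> simp [hw]; ring

theorem ker_verrillForm_eq_span :
    LinearMap.ker (verrillForm ![-6, 2, 3]) = span ℤ {![-2, 1, 1], ![2, 0, 1]} := by
  apply le_antisymm
  · intro w hw
    rw [LinearMap.mem_ker, verrillForm_orthogonal_iff] at hw
    rw [eq_smul_add_smul_of_orthogonal hw]
    exact add_mem (smul_mem _ _ (subset_span (by simp))) (smul_mem _ _ (subset_span (by simp)))
  · rw [span_le, Set.insert_subset_iff, Set.singleton_subset_iff]
    simp only [SetLike.mem_coe, LinearMap.mem_ker, verrillForm_orthogonal_iff]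
    decide

theorem stmt_5 :
    let B : (Fin 3 → ℤ) → (Fin 3 → ℤ) → ℤ :=
      fun u w => u 0 * w 2 + u 2 * w 0 + 6 * (u 1 * w 1)
    let v : Fin 3 → ℤ := ![-6, 2, 3]
    let w₁ : Fin 3 → ℤ := ![-2, 1, 1]
    let w₂ : Fin 3 → ℤ := ![2, 0, 1]
    {w : Fin 3 → ℤ | B v w = 0} = (Submodule.span ℤ {w₁, w₂} : Set (Fin 3 → ℤ)) ∧
      B w₁ w₁ = 2 ∧ B w₁ w₂ = 0 ∧ B w₂ w₁ = 0 ∧ B w₂ w₂ = 4 := by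
  intro B v w₁ w₂
  have hB : {w | B v w = 0} = (LinearMap.ker (verrillForm v) : Set (Fin 3 → ℤ)) := by
    ext w
    simp [B, verrillForm_apply]
  exact ⟨by rw [hB, ker_verrillForm_eq_span], by decide, by decide, by decide, by decide⟩
end

section
/- In ℤ³ equipped with the symmetric bilinear form B(u,w) = u₁w₃ + u₃w₁ + 12u₂w₂, the orthogonal complement of the vector v = (−1,0,2) equals the ℤ-span of w₁ = (1,0,2) and w₂ = (0,1,0), and the Gram matrix of (w₁,w₂) is [[4,0],[0,12]]. (This computes the transcendental lattice of the singular K3 surface Y_{3√6} of the Apéry–Fermi family: T(Y_{3√6}) = [4 0 12].) -/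
theorem mem_span_pair_iff_eq_mul {R : Type*} [CommRing R] (c : R) (w : Fin 3 → R) :
    w ∈ Submodule.span R {![1, 0, c], ![0, 1, 0]} ↔ w 2 = c * w 0 := by
  rw [Submodule.mem_span_pair]
  constructor
  · rintro ⟨a, b, rfl⟩
    simp [mul_comm]
  · intro hw
    refine ⟨w 0, w 1, funext fun i => ?_⟩
    fin_cases i <;> simp [hw, mul_comm]

theorem stmt_9 :
    let B : (Fin 3 → ℤ) → (Fin 3 → ℤ) → ℤ :=
      fun u w => u 0 * w 2 + u 2 * w 0 + 12 * (u 1 * w 1)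
    let v : Fin 3 → ℤ := ![-1, 0, 2]
    let w₁ : Fin 3 → ℤ := ![1, 0, 2]
    let w₂ : Fin 3 → ℤ := ![0, 1, 0]
    {w : Fin 3 → ℤ | B v w = 0} = (Submodule.span ℤ {w₁, w₂} : Set (Fin 3 → ℤ)) ∧
      B w₁ w₁ = 4 ∧ B w₁ w₂ = 0 ∧ B w₂ w₁ = 0 ∧ B w₂ w₂ = 12 := by
  intro B v w₁ w₂
  refine ⟨?_, rfl, rfl, rfl, rfl⟩
  ext w
  have hBv : B v w = 2 * w 0 - w 2 := by
    change -1 * w 2 + 2 * w 0 + 12 * (0 * w 1) = _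
    ring
  rw [Set.mem_ofPred_eq, SetLike.mem_coe, mem_span_pair_iff_eq_mul, hBv, sub_eq_zero, eq_comm]
end
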